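/- Let μ ≥ 1 and let N be an even integer with N > 2μ. Then ‖T_N(μ)⁻¹‖₁ ≤ 2√2 + 1/(2μ). The bound is uniform with respect to the even approximation dimension N. -/

import Mathlib

/-- The `N × N` tridiagonal matrix `T_N(μ)` with diagonal `2, 4, …, 2N`, subdiagonal `μ`
and superdiagonal `-μ` (0-based indexing). -/
noncomputable def Tmat (N : ℕ) (μ : ℝ) : Matrix (Fin N) (Fin N) ℝ :=
  Matrix.of fun i j =>
    if (i : ℕ) = (j : ℕ) then 2 * (((i : ℕ) : ℝ) + 1)
    else if (i : ℕ) = (j : ℕ) + 1 then μ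
    else if (j : ℕ) = (i : ℕ) + 1 then -μ
    else 0

/-- The matrix norm induced by the `‖·‖₁` vector norm: the maximum over columns of the
sum of absolute values of the entries of the column. -/
noncomputable def mat1norm {m n : ℕ} (A : Matrix (Fin m) (Fin n) ℝ) : ℝ :=
  ⨆ l : Fin n, ∑ i : Fin m, |A i l|

/-!
The inverse of `T_N(μ)` is the Green's function of the recurrence
`μ x_{i-1} + 2i x_i - μ x_{i+1} = δ_{ij}`, `x_0 = x_{N+1} = 0`. If `u` solves the homogeneous
recurrence from `u_0 = 0, u_1 = 1` and `(-1)^i d_i` solves it with `d_{N+1} = 0, d_N = 1`,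
then `(T⁻¹)_{ij} = ± u_{min(i,j)} d_{max(i,j)} / (μ d_0)`, the normalisation coming
from the constant Casoratian `u_j d_{j+1} + u_{j+1} d_j = d_0`.

In column `j` the diagonal row of `T T⁻¹ = 1` splits `1` into three nonnegative parts, and
telescoping the recurrences bounds the entries above and below the diagonal by these parts and
`μ (T⁻¹)_{jj}`. The latter is at most `5/2` thanks to the ratio bound `2 d_m ≤ 5 d_{m+1}` for
`m + 1 ≤ μ`, proved by a two-step downward induction that stays inside the matrix because
`N > 2μ`. So every column sum is at most `31/12 < 2√2`.
-/

open Finset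

lemma nonneg_and_succ_pos_of_rec {s c : ℕ → ℝ} {M : ℕ} (h0 : 0 ≤ s 0) (h1 : 0 < s 1)
    (hc : ∀ k < M, 0 < c k) (hs : ∀ k < M, s (k + 2) = c k * s (k + 1) + s k) :
    ∀ k ≤ M, 0 ≤ s k ∧ 0 < s (k + 1) := by
  intro k hk
  induction k with
  | zero => exact ⟨h0, h1⟩
  | succ k ih =>
    obtain ⟨hk0, hk1⟩ := ih (by omega)
    refine ⟨hk1.le, ?_⟩
    rw [hs k (by omega)]
    exact add_pos_of_pos_of_nonneg (mul_pos (hc k (by omega)) hk1) hk0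

noncomputable def fwdSol (μ : ℝ) : ℕ → ℝ
  | 0 => 0
  | 1 => 1
  | n + 2 => 2 * (n + 1) / μ * fwdSol μ (n + 1) + fwdSol μ n

noncomputable def bwdAux (μ : ℝ) (N : ℕ) : ℕ → ℝ
  | 0 => 0
  | 1 => 1
  | k + 2 => 2 * (N - k) / μ * bwdAux μ N (k + 1) + bwdAux μ N k

/-- `bwdSol μ N i = d_i`: the recurrence run backwards from `d_{N+1} = 0`, `d_N = 1`. -/
noncomputable def bwdSol (μ : ℝ) (N i : ℕ) : ℝ := bwdAux μ N (N + 1 - i)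

section Recurrences

variable {μ : ℝ} {N : ℕ}

lemma fwdSol_rec (hμ : μ ≠ 0) (n : ℕ) :
    μ * fwdSol μ (n + 2) = 2 * (n + 1) * fwdSol μ (n + 1) + μ * fwdSol μ n := by
  simp only [fwdSol]
  field_simp

lemma bwdSol_rec (hμ : μ ≠ 0) {m : ℕ} (hm : m + 1 ≤ N) :
    μ * bwdSol μ N m = 2 * (m + 1) * bwdSol μ N (m + 1) + μ * bwdSol μ N (m + 2) := by
  obtain ⟨k, rfl⟩ := Nat.exists_eq_add_of_le hm
  have h₀ : m + 1 + k + 1 - m = k + 2 := by omega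
  have h₁ : m + 1 + k + 1 - (m + 1) = k + 1 := by omega
  have h₂ : m + 1 + k + 1 - (m + 2) = k := by omega
  simp only [bwdSol, h₀, h₁, h₂, bwdAux]
  push_cast
  field_simp
  ring

lemma fwdSol_nonneg (hμ : 0 < μ) (n : ℕ) : 0 ≤ fwdSol μ n :=
  (nonneg_and_succ_pos_of_rec (c := fun n : ℕ => 2 * (n + 1) / μ) (M := n) le_rfl one_pos
    (fun k _ => by positivity) (fun k _ => rfl) n le_rfl).1

lemma bwdAux_nonneg_and_succ_pos (hμ : 0 < μ) :
    ∀ k ≤ N, 0 ≤ bwdAux μ N k ∧ 0 < bwdAux μ N (k + 1) :=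
  nonneg_and_succ_pos_of_rec (c := fun k : ℕ => 2 * (N - k) / μ) le_rfl one_pos
    (fun k hk => div_pos (by linarith [(Nat.cast_lt (α := ℝ)).2 hk]) hμ)
    (fun k _ => rfl)

lemma bwdSol_nonneg (hμ : 0 < μ) (i : ℕ) : 0 ≤ bwdSol μ N i := by
  unfold bwdSol
  cases h : N + 1 - i with
  | zero => simp only [bwdAux, le_refl]
  | succ k => exact (bwdAux_nonneg_and_succ_pos hμ k (by omega)).2.le

lemma bwdSol_zero_pos (hμ : 0 < μ) : 0 < bwdSol μ N 0 :=
  (bwdAux_nonneg_and_succ_pos hμ N le_rfl).2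

lemma bwdSol_succ_self : bwdSol μ N (N + 1) = 0 := by
  simp [bwdSol, bwdAux]

lemma fwdSol_mul_bwdSol_succ_add (hμ : μ ≠ 0) {j : ℕ} (hj : j ≤ N) :
    fwdSol μ j * bwdSol μ N (j + 1) + fwdSol μ (j + 1) * bwdSol μ N j = bwdSol μ N 0 := by
  induction j with
  | zero => simp [fwdSol]
  | succ j ih =>
    rw [← ih (by omega)]
    apply mul_left_cancel₀ hμ
    linear_combination bwdSol μ N (j + 1) * fwdSol_rec hμ j
      - fwdSol μ (j + 1) * bwdSol_rec hμ (m := j) hj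

lemma sum_range_mul_fwdSol (hμ : μ ≠ 0) (n : ℕ) :
    ∑ k ∈ range n, 2 * ((k : ℝ) + 1) * fwdSol μ (k + 1)
      = μ * (fwdSol μ (n + 1) + fwdSol μ n - 1) := by
  induction n with
  | zero => simp [fwdSol]
  | succ n ih =>
    rw [sum_range_succ, ih]
    linear_combination -fwdSol_rec hμ n

lemma sum_Ico_mul_bwdSol (hμ : μ ≠ 0) {m n : ℕ} (hmn : m ≤ n) (hn : n ≤ N) :
    ∑ k ∈ Ico m n, 2 * ((k : ℝ) + 1) * bwdSol μ N (k + 1)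
      = μ * (bwdSol μ N m + bwdSol μ N (m + 1) - bwdSol μ N n - bwdSol μ N (n + 1)) := by
  induction n, hmn using Nat.le_induction with
  | base => simp
  | succ n hmn ih =>
    rw [sum_Ico_succ_top hmn, ih (by omega)]
    linear_combination -bwdSol_rec hμ (m := n) hn

lemma two_mul_bwdSol_le_of_le (hμ : 0 < μ) {m : ℕ} (hm : m + 2 ≤ N)
    (h₁ : (m : ℝ) + 1 ≤ μ) (h₃ : μ ≤ (m : ℝ) + 3) :
    2 * bwdSol μ N m ≤ 5 * bwdSol μ N (m + 1) := by
  have r₀ := bwdSol_rec (N := N) hμ.ne' (m := m) (by omega)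
  have r₁ := bwdSol_rec hμ.ne' (m := m + 1) hm
  have d₁ := bwdSol_nonneg (N := N) hμ (m + 1)
  have d₃ := bwdSol_nonneg (N := N) hμ (m + 3)
  norm_num [add_assoc] at r₁
  have hd₂ : 2 * (m + 2) * bwdSol μ N (m + 2) ≤ μ * bwdSol μ N (m + 1) := by
    linarith [mul_nonneg hμ.le d₃]
  have hquad : 0 ≤ (μ - (m + 1)) * ((m + 3) - μ) * bwdSol μ N (m + 1) := by
    have := mul_nonneg (sub_nonneg.2 h₁) (sub_nonneg.2 h₃)
    positivity
  have key : (μ * (m + 2)) * (2 * bwdSol μ N m) ≤ (μ * (m + 2)) * (5 * bwdSol μ N (m + 1)) :=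
    calc (μ * (m + 2)) * (2 * bwdSol μ N m)
        = 4 * (m + 1) * (m + 2) * bwdSol μ N (m + 1)
          + μ * (2 * (m + 2) * bwdSol μ N (m + 2)) := by
          linear_combination 2 * ((m : ℝ) + 2) * r₀
      _ ≤ 4 * (m + 1) * (m + 2) * bwdSol μ N (m + 1) + μ * (μ * bwdSol μ N (m + 1)) := by
          gcongr
      _ ≤ (μ * (m + 2)) * (5 * bwdSol μ N (m + 1)) := by
          nlinarith [mul_nonneg (sub_nonneg.2 h₁) d₁]
  exact le_of_mul_le_mul_left key (by positivity)

lemma two_mul_bwdSol_le_of_step (hμ : 0 < μ) {m : ℕ} (hm : m + 2 ≤ N)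
    (h₁ : (m : ℝ) + 1 ≤ μ) (h : 2 * bwdSol μ N (m + 2) ≤ 5 * bwdSol μ N (m + 3)) :
    2 * bwdSol μ N m ≤ 5 * bwdSol μ N (m + 1) := by
  have r₀ := bwdSol_rec (N := N) hμ.ne' (m := m) (by omega)
  have r₁ := bwdSol_rec hμ.ne' (m := m + 1) hm
  have d₁ := bwdSol_nonneg (N := N) hμ (m + 1)
  norm_num [add_assoc] at r₁
  have hd₂ : (10 * (m + 2) + 2 * μ) * bwdSol μ N (m + 2) ≤ 5 * μ * bwdSol μ N (m + 1) := by
    nlinarith [mul_le_mul_of_nonneg_left h hμ.le]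
  have key : (μ * (10 * (m + 2) + 2 * μ)) * (2 * bwdSol μ N m)
      ≤ (μ * (10 * (m + 2) + 2 * μ)) * (5 * bwdSol μ N (m + 1)) :=
    calc (μ * (10 * (m + 2) + 2 * μ)) * (2 * bwdSol μ N m)
        = 4 * (m + 1) * (10 * (m + 2) + 2 * μ) * bwdSol μ N (m + 1)
          + 2 * μ * ((10 * (m + 2) + 2 * μ) * bwdSol μ N (m + 2)) := by
          linear_combination 2 * (10 * ((m : ℝ) + 2) + 2 * μ) * r₀
      _ ≤ 4 * (m + 1) * (10 * (m + 2) + 2 * μ) * bwdSol μ N (m + 1)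
          + 2 * μ * (5 * μ * bwdSol μ N (m + 1)) := by
          gcongr
      _ ≤ (μ * (10 * (m + 2) + 2 * μ)) * (5 * bwdSol μ N (m + 1)) := by
          have hm₀ : (0 : ℝ) ≤ m := m.cast_nonneg
          have hc : (0 : ℝ) ≤ 42 * m + 92 := by positivity
          nlinarith [mul_nonneg (mul_nonneg (sub_nonneg.2 h₁) d₁) hc,
            mul_nonneg (mul_nonneg hm₀ hm₀) d₁, mul_nonneg hm₀ d₁]
  exact le_of_mul_le_mul_left key (by positivity)

lemma two_mul_bwdSol_le (hμ : 0 < μ) (hN : 2 * μ < N) {m : ℕ} (hm : (m : ℝ) + 1 ≤ μ) :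
    2 * bwdSol μ N m ≤ 5 * bwdSol μ N (m + 1) := by
  have hm₂ : ∀ m : ℕ, (m : ℝ) + 1 ≤ μ → m + 2 ≤ N := fun m hm => by
    have : ((m + 2 : ℕ) : ℝ) < N := by push_cast; linarith [m.cast_nonneg (α := ℝ)]
    exact_mod_cast this.le
  suffices h : ∀ k m : ℕ, μ ≤ m + 2 * k + 3 → (m : ℝ) + 1 ≤ μ →
      2 * bwdSol μ N m ≤ 5 * bwdSol μ N (m + 1) by
    obtain ⟨k, hk⟩ := exists_nat_ge μ
    exact h k m (by linarith [m.cast_nonneg (α := ℝ)]) hm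
  intro k
  induction k with
  | zero =>
    intro m h₃ h₁
    exact two_mul_bwdSol_le_of_le hμ (hm₂ m h₁) h₁ (by simpa using h₃)
  | succ k ih =>
    intro m h₃ h₁
    by_cases hμm : μ ≤ m + 3
    · exact two_mul_bwdSol_le_of_le hμ (hm₂ m h₁) h₁ hμm
    · refine two_mul_bwdSol_le_of_step hμ (hm₂ m h₁) h₁ (ih (m + 2) ?_ ?_) <;>
        push_cast at h₃ ⊢ <;> linarith

end Recurrences

/-- `i - j` truncates: the sign is `(-1)^(i-j)` below the diagonal and `1` on and above it. -/
noncomputable def green (μ : ℝ) (N i j : ℕ) : ℝ :=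
  (-1) ^ (i - j) * fwdSol μ (min i j) * bwdSol μ N (max i j) / (μ * bwdSol μ N 0)

noncomputable def greenMat (μ : ℝ) (N : ℕ) : Matrix (Fin N) (Fin N) ℝ :=
  Matrix.of fun i j => green μ N (i + 1) (j + 1)

section Green

variable {μ : ℝ} {N : ℕ}

lemma green_of_le {i j : ℕ} (h : i ≤ j) :
    green μ N i j = fwdSol μ i * bwdSol μ N j / (μ * bwdSol μ N 0) := by
  simp [green, Nat.sub_eq_zero_of_le h, h]

lemma green_of_ge {i j : ℕ} (h : j ≤ i) :
    green μ N i j = (-1) ^ (i - j) * (fwdSol μ j * bwdSol μ N i / (μ * bwdSol μ N 0)) := by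
  simp [green, h, mul_div_assoc, mul_assoc]

lemma abs_green_of_ge (hμ : 0 < μ) {i j : ℕ} (h : j ≤ i) :
    |green μ N i j| = fwdSol μ j * bwdSol μ N i / (μ * bwdSol μ N 0) := by
  rw [green_of_ge h, abs_mul, abs_pow, abs_neg, abs_one, one_pow, one_mul, abs_of_nonneg]
  have := bwdSol_zero_pos (N := N) hμ
  have := fwdSol_nonneg hμ j
  have := bwdSol_nonneg (N := N) hμ i
  positivity

lemma green_nonneg_of_le (hμ : 0 < μ) {i j : ℕ} (h : i ≤ j) : 0 ≤ green μ N i j := by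
  rw [green_of_le h]
  have := bwdSol_zero_pos (N := N) hμ
  have := fwdSol_nonneg hμ i
  have := bwdSol_nonneg (N := N) hμ j
  positivity

lemma green_succ_self_nonpos (hμ : 0 < μ) (j : ℕ) : green μ N (j + 1) j ≤ 0 := by
  rw [green_of_ge (Nat.le_add_right j 1), Nat.add_sub_cancel_left, pow_one, neg_one_mul,
    neg_nonpos]
  have := bwdSol_zero_pos (N := N) hμ
  have := fwdSol_nonneg hμ j
  have := bwdSol_nonneg (N := N) hμ (j + 1)
  positivity

lemma green_rec (hμ : 0 < μ) {r c : ℕ} (hr : r + 1 ≤ N) (hc : c ≤ N) :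
    μ * green μ N r c + 2 * (r + 1) * green μ N (r + 1) c - μ * green μ N (r + 2) c
      = if r + 1 = c then 1 else 0 := by
  have hd₀ : bwdSol μ N 0 ≠ 0 := (bwdSol_zero_pos hμ).ne'
  have hμ₀ : μ ≠ 0 := hμ.ne'
  rcases lt_trichotomy (r + 1) c with h | rfl | h
  · rw [green_of_le (by omega), green_of_le (by omega), green_of_le (by omega), if_neg h.ne]
    field_simp
    linear_combination -bwdSol μ N c * fwdSol_rec hμ₀ r
  · rw [green_of_le (by omega), green_of_le le_rfl, green_of_ge (by omega), if_pos rfl,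
      show r + 2 - (r + 1) = 1 by omega, pow_one]
    field_simp
    linear_combination -bwdSol μ N (r + 1) * fwdSol_rec hμ₀ r
      + μ * fwdSol_mul_bwdSol_succ_add hμ₀ hc
  · rw [green_of_ge (by omega), green_of_ge (by omega), green_of_ge (by omega), if_neg h.ne',
      show r + 1 - c = r - c + 1 by omega, show r + 2 - c = r - c + 2 by omega,
      pow_succ, pow_succ]
    field_simp
    linear_combination (-1) ^ (r - c) * fwdSol μ c * bwdSol_rec hμ₀ hr

end Green

lemma Fin.sum_univ_ite_val_eq {M : Type*} [AddCommMonoid M] (N n : ℕ) (c : M) :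
    ∑ k : Fin N, (if (k : ℕ) = n then c else 0) = if n < N then c else 0 := by
  rw [Fin.sum_univ_eq_sum_range (fun k => if k = n then c else 0), sum_ite_eq']
  simp only [mem_range]

lemma Tmat_mul_apply {μ : ℝ} {N : ℕ} (v : ℕ → ℝ) (h₀ : v 0 = 0) (hN : v (N + 1) = 0)
    (i : Fin N) :
    ∑ k : Fin N, Tmat N μ i k * v (k + 1)
      = μ * v i + 2 * ((i : ℕ) + 1) * v (i + 1) - μ * v (i + 2) := by
  have hterm : ∀ k : Fin N, Tmat N μ i k * v (k + 1)
      = (if (k : ℕ) = i then 2 * ((i : ℕ) + 1) * v (i + 1) else 0)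
        + (if (k : ℕ) = i - 1 then μ * v i else 0)
        + (if (k : ℕ) = i + 1 then -(μ * v (i + 2)) else 0) := by
    intro k
    obtain ⟨a, ha⟩ := i
    obtain ⟨b, hb⟩ := k
    simp only [Tmat, Matrix.of_apply]
    split_ifs <;> (try subst_vars) <;> first
      | omega
      | ring1
      | (obtain rfl : b = 0 := by omega
         simp [h₀])
  simp only [hterm, sum_add_distrib, Fin.sum_univ_ite_val_eq, if_pos i.isLt,
    if_pos (show (i : ℕ) - 1 < N by omega)]
  split_ifs with h
  · ring
  · rw [show (i : ℕ) + 2 = N + 1 by omega, hN]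
    ring

lemma Tmat_mul_greenMat {μ : ℝ} {N : ℕ} (hμ : 0 < μ) : Tmat N μ * greenMat μ N = 1 := by
  ext i j
  have h₀ : green μ N 0 (j + 1) = 0 := by
    rw [green_of_le (Nat.zero_le _)]
    simp [fwdSol]
  have hN : green μ N (N + 1) (j + 1) = 0 := by
    rw [green_of_ge (by omega), bwdSol_succ_self]
    simp
  simp only [Matrix.mul_apply, greenMat, Matrix.of_apply]
  rw [Tmat_mul_apply (fun n => green μ N n (j + 1)) h₀ hN i, green_rec hμ i.isLt j.isLt,
    Matrix.one_apply]
  simp [Fin.ext_iff]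

section ColumnSums

variable {μ : ℝ} {N : ℕ}

lemma two_mul_sum_abs_green_above_le (hμ : 0 < μ) (L : ℕ) :
    2 * ∑ k ∈ range L, |green μ N (k + 1) (L + 1)|
      ≤ μ * (green μ N (L + 1) (L + 1) + green μ N L (L + 1)) := by
  set W := μ * bwdSol μ N 0
  have hW : 0 < W := mul_pos hμ (bwdSol_zero_pos hμ)
  have hterm : ∀ k ∈ range L, 2 * |green μ N (k + 1) (L + 1)|
      ≤ 2 * ((k : ℝ) + 1) * fwdSol μ (k + 1) * bwdSol μ N (L + 1) / W := by
    intro k hk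
    have hkL : k + 1 ≤ L + 1 := by simp only [mem_range] at hk; omega
    rw [abs_of_nonneg (green_nonneg_of_le hμ hkL), green_of_le hkL, ← mul_div_assoc]
    have := mul_nonneg (fwdSol_nonneg hμ (k + 1)) (bwdSol_nonneg (N := N) hμ (L + 1))
    apply div_le_div_of_nonneg_right _ hW.le
    nlinarith [k.cast_nonneg (α := ℝ)]
  calc 2 * ∑ k ∈ range L, |green μ N (k + 1) (L + 1)|
      ≤ ∑ k ∈ range L, 2 * ((k : ℝ) + 1) * fwdSol μ (k + 1) * bwdSol μ N (L + 1) / W := by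
        rw [mul_sum]
        exact sum_le_sum hterm
    _ = μ * (fwdSol μ (L + 1) + fwdSol μ L - 1) * bwdSol μ N (L + 1) / W := by
        rw [← sum_div, ← sum_mul, sum_range_mul_fwdSol hμ.ne']
    _ ≤ μ * (fwdSol μ (L + 1) + fwdSol μ L) * bwdSol μ N (L + 1) / W := by
        have := bwdSol_nonneg (N := N) hμ (L + 1)
        gcongr
        linarith
    _ = μ * (green μ N (L + 1) (L + 1) + green μ N L (L + 1)) := by
        rw [green_of_le le_rfl, green_of_le (Nat.le_succ L)]
        ring

lemma sum_abs_green_below_le (hμ : 0 < μ) {L : ℕ} (hL : L < N) :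
    2 * ((L : ℝ) + 2) * ∑ k ∈ Ico (L + 1) N, |green μ N (k + 1) (L + 1)|
      ≤ μ * (green μ N (L + 1) (L + 1) - green μ N (L + 2) (L + 1)) := by
  set W := μ * bwdSol μ N 0
  have hW : 0 < W := mul_pos hμ (bwdSol_zero_pos hμ)
  have hterm : ∀ k ∈ Ico (L + 1) N, 2 * ((L : ℝ) + 2) * |green μ N (k + 1) (L + 1)|
      ≤ 2 * ((k : ℝ) + 1) * bwdSol μ N (k + 1) * fwdSol μ (L + 1) / W := by
    intro k hk
    have hLk : L + 1 ≤ k := (mem_Ico.1 hk).1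
    rw [abs_green_of_ge hμ (by omega), ← mul_div_assoc]
    have := mul_nonneg (fwdSol_nonneg hμ (L + 1)) (bwdSol_nonneg (N := N) hμ (k + 1))
    apply div_le_div_of_nonneg_right _ hW.le
    have : (L : ℝ) + 1 ≤ k := by exact_mod_cast hLk
    nlinarith
  calc 2 * ((L : ℝ) + 2) * ∑ k ∈ Ico (L + 1) N, |green μ N (k + 1) (L + 1)|
      ≤ ∑ k ∈ Ico (L + 1) N,
          2 * ((k : ℝ) + 1) * bwdSol μ N (k + 1) * fwdSol μ (L + 1) / W := by
        rw [mul_sum]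
        exact sum_le_sum hterm
    _ = μ * (bwdSol μ N (L + 1) + bwdSol μ N (L + 2) - bwdSol μ N N - bwdSol μ N (N + 1))
          * fwdSol μ (L + 1) / W := by
        rw [← sum_div, ← sum_mul, sum_Ico_mul_bwdSol hμ.ne' hL le_rfl]
    _ ≤ μ * (bwdSol μ N (L + 1) + bwdSol μ N (L + 2)) * fwdSol μ (L + 1) / W := by
        have := fwdSol_nonneg hμ (L + 1)
        have := bwdSol_nonneg (N := N) hμ N
        gcongr
        rw [bwdSol_succ_self]
        linarith
    _ = μ * (green μ N (L + 1) (L + 1) - green μ N (L + 2) (L + 1)) := by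
        rw [green_of_le le_rfl, green_of_ge (Nat.le_succ _), show L + 2 - (L + 1) = 1 by omega]
        ring

lemma two_mul_green_diag_le (hμ : 0 < μ) (hN : 2 * μ < N) {L : ℕ}
    (hLμ : (L : ℝ) + 2 ≤ μ) :
    2 * green μ N (L + 1) (L + 1) ≤ -5 * green μ N (L + 2) (L + 1) := by
  have hd := two_mul_bwdSol_le hμ hN (m := L + 1) (by push_cast; linarith)
  have := fwdSol_nonneg hμ (L + 1)
  have := bwdSol_zero_pos (N := N) hμ
  rw [green_of_le le_rfl, green_of_ge (Nat.le_succ _), show L + 2 - (L + 1) = 1 by omega]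
  field_simp
  nlinarith

lemma sum_abs_green_le (hμ : 1 ≤ μ) (hN : 2 * μ < N) {L : ℕ} (hL : L < N) :
    ∑ k ∈ range N, |green μ N (k + 1) (L + 1)| ≤ 31 / 12 := by
  have hμ₀ : 0 < μ := by linarith
  set p := green μ N L (L + 1)
  set X := green μ N (L + 1) (L + 1)
  set r := green μ N (L + 2) (L + 1)
  set Lo := ∑ k ∈ range L, |green μ N (k + 1) (L + 1)|
  set Hi := ∑ k ∈ Ico (L + 1) N, |green μ N (k + 1) (L + 1)|
  have hsplit : ∑ k ∈ range N, |green μ N (k + 1) (L + 1)| = Lo + X + Hi := by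
    rw [← sum_range_add_sum_Ico _ hL.le, sum_eq_sum_Ico_succ_bot hL,
      abs_of_nonneg (green_nonneg_of_le hμ₀ le_rfl), add_assoc]
  have hdiag : μ * p + 2 * ((L : ℝ) + 1) * X - μ * r = 1 := by
    simpa using green_rec hμ₀ hL hL
  have hp : 0 ≤ p := green_nonneg_of_le hμ₀ (Nat.le_succ L)
  have hX : 0 ≤ X := green_nonneg_of_le hμ₀ le_rfl
  have hr : r ≤ 0 := green_succ_self_nonpos hμ₀ (L + 1)
  have hLo : 2 * Lo ≤ μ * (X + p) := two_mul_sum_abs_green_above_le hμ₀ L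
  have hHi : 2 * ((L : ℝ) + 2) * Hi ≤ μ * (X - r) := sum_abs_green_below_le hμ₀ hL
  have hHi₀ : 0 ≤ Hi := sum_nonneg fun _ _ => abs_nonneg _
  have hμX : μ * X ≤ 5 / 2 := by
    by_cases h : μ ≤ 2 * ((L : ℝ) + 1)
    · nlinarith [mul_le_mul_of_nonneg_right h hX]
    · have := two_mul_green_diag_le hμ₀ hN (L := L) (by linarith)
      nlinarith
  rw [hsplit]
  rcases Nat.eq_zero_or_pos L with hL0 | hL1
  · have hLo₀ : Lo = 0 := by simp [Lo, hL0]
    subst hL0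
    norm_num at hdiag hHi
    nlinarith
  · have h1 : (1 : ℝ) ≤ L := by exact_mod_cast hL1
    nlinarith

end ColumnSums

theorem stmt11_general (μ : ℝ) (hμ : 1 ≤ μ) (N : ℕ) (hN : 2 * μ < (N : ℝ)) :
    mat1norm ((Tmat N μ)⁻¹) ≤ 2 * Real.sqrt 2 + 1 / (2 * μ) := by
  have hμ₀ : 0 < μ := by linarith
  rw [Matrix.inv_eq_right_inv (Tmat_mul_greenMat hμ₀)]
  have hcol : mat1norm (greenMat μ N) ≤ 31 / 12 := by
    refine Real.iSup_le (fun l => ?_) (by norm_num)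
    exact (Fin.sum_univ_eq_sum_range (fun k => |green μ N (k + 1) (l + 1)|) N).trans_le
      (sum_abs_green_le hμ hN l.isLt)
  have hsqrt : (31 : ℝ) / 12 ≤ 2 * Real.sqrt 2 := by
    nlinarith [Real.sq_sqrt (zero_le_two (α := ℝ)), Real.sqrt_nonneg 2]
  have : 0 < 1 / (2 * μ) := by positivity
  linarith

/-- `‖T_N(μ)⁻¹‖₁ ≤ 2√2 + 1/(2μ)` for all even `N > 2μ`. -/
theorem stmt11 (μ : ℝ) (hμ : 1 ≤ μ) (N : ℕ) (hNe : Even N) (hN : 2 * μ < (N : ℝ)) :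
    mat1norm ((Tmat N μ)⁻¹) ≤ 2 * Real.sqrt 2 + 1 / (2 * μ) :=
  stmt11_general μ hμ N hN
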